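/- The canonical weight sequence is a valid representation for rooted trees: if two rooted trees R_1 and R_2 satisfy cws(R_1) = cws(R_2), then R_1 and R_2 are isomorphic as rooted trees. -/

import Mathlib

inductive OTree : Type
  | node : List OTree → OTree

namespace OTree

def size : OTree → ℕ
  | .node cs => (cs.attach.map (fun c => size c.1)).sum + 1
decreasing_by simp only [OTree.node.sizeOf_spec]; have := List.sizeOf_lt_of_mem c.2; omega

def ws : OTree → List ℕ
  | .node cs => size (.node cs) :: (cs.attach.map (fun c => ws c.1)).flatten
decreasing_by simp only [OTree.node.sizeOf_spec]; have := List.sizeOf_lt_of_mem c.2; omega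

def preorder : OTree → List OTree
  | .node cs => .node cs :: (cs.attach.map (fun c => preorder c.1)).flatten
decreasing_by simp only [OTree.node.sizeOf_spec]; have := List.sizeOf_lt_of_mem c.2; omega

lemma size_pos (R : OTree) : 0 < R.size := by
  cases R with | node cs => simp only [OTree.size]; omega

end OTree

inductive RIso : OTree → OTree → Prop
  | node {cs cs' : List OTree} (l : List OTree) (hp : l.Perm cs')
      (hlen : cs.length = l.length)
      (h : ∀ (i : ℕ) (h1 : i < cs.length) (h2 : i < l.length), RIso cs[i] l[i]) :
      RIso (.node cs) (.node cs')

inductive Canonical : OTree → Prop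
  | node {cs : List OTree}
      (hchain : List.Chain' (fun u v => OTree.ws v ≤ OTree.ws u) cs)
      (h : ∀ c ∈ cs, Canonical c) : Canonical (.node cs)

def Centroidal {V : Type} [Fintype V] (G : SimpleGraph V) (u : V) : Prop :=
  ∀ v : ↥{x : V | x ≠ u},
    2 * Nat.card {w : ↥{x : V | x ≠ u} | (G.induce {x : V | x ≠ u}).Reachable v w}
      ≤ Fintype.card V

def IsParent (w : List ℕ) (i j : ℕ) : Prop :=
  i < j ∧ j < i + w.getD i 0 ∧ ∀ k, i < k → k < j → ¬ (j < k + w.getD k 0)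

def graphOf (R : OTree) : SimpleGraph (Fin R.size) :=
  SimpleGraph.fromRel (fun i j => IsParent R.ws i.1 j.1)

def rootIdx (R : OTree) : Fin R.size := ⟨0, R.size_pos⟩

def B (n : ℕ) : Set (List ℕ) := {s | ∃ R : OTree, Canonical R ∧ R.size = n ∧ R.ws = s}

def Succeq (s t : List ℕ) : Prop := t ≤ s ∨ s <+: t

def A (q n : ℕ) : Set (List ℕ × List ℕ) :=
  {p | p.1 ∈ B q ∧ p.2 ∈ B (n - q) ∧ Succeq p.1 p.2.tail}

def FwsUni {V : Type} [Fintype V] (G : SimpleGraph V) (s : List ℕ) : Prop :=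
  ∃ R : OTree, Canonical R ∧ R.ws = s ∧
    ∃ f : graphOf R ≃g G, Centroidal G (f (rootIdx R))

def FwsBi {V : Type} [Fintype V] (G : SimpleGraph V) (s : List ℕ) : Prop :=
  ∃ u v, u ≠ v ∧ G.Adj u v ∧ Centroidal G u ∧ Centroidal G v ∧
  ∃ A B : OTree, Canonical A ∧ Canonical B ∧ B.ws ≤ A.ws ∧ s = A.ws ++ B.ws ∧
  ∃ (fA : graphOf A ≃g (G.deleteEdges {s(u,v)}).induce
        {x | (G.deleteEdges {s(u,v)}).Reachable u x})
    (fB : graphOf B ≃g (G.deleteEdges {s(u,v)}).induce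
        {x | (G.deleteEdges {s(u,v)}).Reachable v x}),
    (fA (rootIdx A)).1 = u ∧ (fB (rootIdx B)).1 = v

/-!
The weight sequence of an ordered tree is self-delimiting: its first entry is its own length,
the size of the tree. So the sequences of the children can be cut back out of their
concatenation, and by induction `ws` determines the ordered tree. Hence `C1 = C2`, and
`R1 ≅ C1 = C2 ≅ R2` because r-isomorphism is an equivalence relation.
-/

theorem List.eq_of_flatten_eq_of_head?_eq_length {L L' : List (List ℕ)}
    (hL : ∀ x ∈ L, x.head? = some x.length) (hL' : ∀ x ∈ L', x.head? = some x.length)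
    (h : L.flatten = L'.flatten) : L = L' := by
  induction L generalizing L' with
  | nil =>
    cases L' with
    | nil => rfl
    | cons y ys =>
      obtain ⟨rfl, -⟩ := List.append_eq_nil_iff.mp h.symm
      simp at hL'
  | cons x xs ih =>
    cases L' with
    | nil =>
      obtain ⟨rfl, -⟩ := List.append_eq_nil_iff.mp h
      simp at hL
    | cons y ys =>
      rw [List.forall_mem_cons] at hL hL'
      rw [List.flatten_cons, List.flatten_cons] at h
      have hx : x ≠ [] := by rintro rfl; simp at hL
      have hy : y ≠ [] := by rintro rfl; simp at hL'
      have hlen : x.length = y.length := by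
        have := congrArg List.head? h
        rwa [List.head?_append_of_ne_nil _ hx, List.head?_append_of_ne_nil _ hy, hL.1, hL'.1,
          Option.some_inj] at this
      obtain ⟨rfl, hrest⟩ := List.append_inj h hlen
      rw [ih hL.2 hL'.2 hrest]

theorem List.Forall₂.comp {α β γ : Type*} {R : α → β → Prop} {S : β → γ → Prop}
    {T : α → γ → Prop} (h : ∀ a b c, R a b → S b c → T a c) :
    ∀ {l₁ l₂ l₃}, Forall₂ R l₁ l₂ → Forall₂ S l₂ l₃ → Forall₂ T l₁ l₃
  | _, _, _, .nil, .nil => .nil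
  | _, _, _, .cons hr hrs, .cons hs hss => .cons (h _ _ _ hr hs) (hrs.comp h hss)

namespace OTree

@[simp] lemma size_node (cs : List OTree) : size (.node cs) = (cs.map size).sum + 1 := by
  rw [size, List.attach_map_val]

@[simp] lemma ws_node (cs : List OTree) :
    ws (.node cs) = size (.node cs) :: (cs.map ws).flatten := by
  rw [ws, List.attach_map_val]

theorem length_ws : ∀ T : OTree, T.ws.length = T.size
  | .node cs => by
    rw [ws_node, size_node, List.length_cons, List.length_flatten, List.map_map]
    congr 2
    exact List.map_congr_left fun c _ => length_ws c

lemma head?_ws (T : OTree) : T.ws.head? = some T.ws.length := by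
  rw [length_ws]
  cases T
  rw [ws_node, List.head?_cons]

theorem ws_injective : Function.Injective ws
  | .node cs, .node cs', h => by
    rw [ws_node, ws_node] at h
    have hmap : cs.map ws = cs'.map ws :=
      List.eq_of_flatten_eq_of_head?_eq_length (List.forall_mem_map.2 fun c _ => head?_ws c)
        (List.forall_mem_map.2 fun c _ => head?_ws c) (List.cons.inj h).2
    congr 1
    apply List.ext_getElem (by simpa using congrArg List.length hmap)
    intro i h1 h2
    exact ws_injective (by simpa [h1, h2] using congrArg (·[i]?) hmap)
decreasing_by
  have := List.sizeOf_lt_of_mem (List.getElem_mem h1); simp only [node.sizeOf_spec]; omega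

end OTree

namespace RIso

lemma node_iff {cs cs' : List OTree} :
    RIso (.node cs) (.node cs') ↔ ∃ l, List.Forall₂ RIso cs l ∧ l.Perm cs' := by
  constructor
  · rintro ⟨l, hp, hlen, h⟩
    exact ⟨l, List.forall₂_of_length_eq_of_get hlen h, hp⟩
  · rintro ⟨l, hf, hp⟩
    exact .node l hp hf.length_eq fun i h1 h2 => hf.get h1 h2

theorem symm {T T' : OTree} (h : RIso T T') : RIso T' T := by
  induction h with
  | node l hp hlen _ ih =>
    have hf : List.Forall₂ (flip RIso) _ l := List.forall₂_of_length_eq_of_get hlen ih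
    exact node_iff.mpr (List.perm_comp_forall₂ hp.symm hf.flip)

theorem trans {T₁ T₂ T₃ : OTree} (h₁₂ : RIso T₁ T₂) (h₂₃ : RIso T₂ T₃) : RIso T₁ T₃ := by
  induction h₁₂ generalizing T₃ with
  | node l hp hlen _ ih =>
    cases T₃
    obtain ⟨m, hm, hmp⟩ := node_iff.mp h₂₃
    obtain ⟨m', hm', hm'p⟩ := List.perm_comp_forall₂ hp hm
    have hf : List.Forall₂ (fun a b => ∀ T, RIso b T → RIso a T) _ l :=
      List.forall₂_of_length_eq_of_get hlen ih
    exact node_iff.mpr ⟨m', hf.comp (fun _ _ c hab hbc => hab c hbc) hm', hm'p.trans hmp⟩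

end RIso

theorem stmt6_general (R1 R2 C1 C2 : OTree) (hi1 : RIso R1 C1) (hi2 : RIso R2 C2)
    (h : C1.ws = C2.ws) : RIso R1 R2 := by
  obtain rfl := OTree.ws_injective h
  exact hi1.trans hi2.symm

theorem stmt6 (R1 R2 C1 C2 : OTree) (h1 : Canonical C1) (h2 : Canonical C2)
    (hi1 : RIso R1 C1) (hi2 : RIso R2 C2) (h : C1.ws = C2.ws) : RIso R1 R2 :=
  stmt6_general R1 R2 C1 C2 hi1 hi2 h
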